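/- arXiv:2007.12486 — 3 statements merged into one kernel-verified Lean document; each statement's English description precedes it below -/
import Mathlib

section
/- Let X be a Hilbert space, A, B nonempty closed convex subsets, v the displacement vector, E and F the sets of points in A (resp. B) realizing dist(A,B), assumed nonempty. Then for every e ∈ E, P_B(e) = P_F(e) = e + v, and for every f ∈ F, P_A(f) = P_E(f) = f - v. -/
open Pointwise

/-- `p` is the metric projection of `x` onto the set `C`. -/
def IsProjPt {X : Type*} [NormedAddCommGroup X] (C : Set X) (x p : X) : Prop :=
  p ∈ C ∧ ∀ y ∈ C, dist x p ≤ dist x y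

private lemma le_infDist' {X : Type*} [MetricSpace X] {s : Set X} (hs : s.Nonempty)
    {x : X} {r : ℝ} (h : ∀ y ∈ s, r ≤ dist x y) : r ≤ Metric.infDist x s := by
  by_contra hlt
  obtain ⟨y, hy, hd⟩ := (Metric.infDist_lt_iff hs).1 (lt_of_not_ge hlt)
  exact absurd (h y hy) (not_le.2 hd)

/-- Uniqueness of the nearest point in a convex set. -/
private lemma proj_unique {X : Type*} [NormedAddCommGroup X] [InnerProductSpace ℝ X]
    {C : Set X} (hC : Convex ℝ C) {x p q : X} (hp : p ∈ C) (hq : q ∈ C)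
    (hpd : ∀ y ∈ C, dist x p ≤ dist x y) (hqd : ∀ y ∈ C, dist x q ≤ dist x y) : p = q := by
  set m : X := (1/2 : ℝ) • p + (1/2 : ℝ) • q with hmdef
  have hm : m ∈ C := hC hp hq (by norm_num) (by norm_num) (by norm_num)
  have h1 : dist x p ≤ dist x m := hpd _ hm
  have h2 : dist x q ≤ dist x m := hqd _ hm
  have hpar := parallelogram_law_with_norm ℝ (x - m) ((1/2 : ℝ) • (p - q))
  have e1 : x - m + (1/2 : ℝ) • (p - q) = x - q := by rw [hmdef]; module
  have e2 : x - m - (1/2 : ℝ) • (p - q) = x - p := by rw [hmdef]; module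
  rw [e1, e2] at hpar
  simp only [dist_eq_norm] at h1 h2
  have hn : ‖(1/2 : ℝ) • (p - q)‖ = 0 := by
    nlinarith [norm_nonneg (x - p), norm_nonneg (x - q), norm_nonneg (x - m),
      norm_nonneg ((1/2 : ℝ) • (p - q))]
  have hz : (1/2 : ℝ) • (p - q) = 0 := norm_eq_zero.1 hn
  have : p - q = 0 := by
    have := congrArg (fun y : X => (2 : ℝ) • y) hz
    simpa [smul_smul] using this
  linear_combination (norm := abel) this

theorem stmt8 {X : Type*} [NormedAddCommGroup X] [InnerProductSpace ℝ X] [CompleteSpace X]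
    (A B : Set X) (hAne : A.Nonempty) (hBne : B.Nonempty)
    (hAc : IsClosed A) (hBc : IsClosed B) (hAconv : Convex ℝ A) (hBconv : Convex ℝ B)
    (v : X) (hv : IsProjPt (closure (B - A)) 0 v)
    (E F : Set X)
    (hE : E = {a ∈ A | Metric.infDist a B = ⨅ a' : A, Metric.infDist (a' : X) B})
    (hF : F = {b ∈ B | Metric.infDist b A = ⨅ a' : A, Metric.infDist (a' : X) B})
    (hEne : E.Nonempty) (hFne : F.Nonempty)
    (PA PB PE PF : X → X)
    (hPA : ∀ x : X, IsProjPt A x (PA x)) (hPB : ∀ x : X, IsProjPt B x (PB x))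
    (hPE : ∀ x : X, IsProjPt E x (PE x)) (hPF : ∀ x : X, IsProjPt F x (PF x)) :
    (∀ e ∈ E, PB e = e + v ∧ PF e = e + v) ∧ (∀ f ∈ F, PA f = f - v ∧ PE f = f - v) := by
  set d : ℝ := ⨅ a' : A, Metric.infDist (a' : X) B with hd
  have hBAne : (B - A).Nonempty := hBne.sub hAne
  have hclne : (closure (B - A)).Nonempty := hBAne.closure
  have hclconv : Convex ℝ (closure (B - A)) := (hBconv.sub hAconv).closure
  have hbdd : BddBelow (Set.range fun a' : A => Metric.infDist (a' : X) B) := by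
    refine ⟨0, ?_⟩
    rintro _ ⟨a, rfl⟩
    exact Metric.infDist_nonneg
  haveI : Nonempty A := hAne.to_subtype
  -- d ≤ infDist a B for a ∈ A
  have hdle : ∀ a ∈ A, d ≤ Metric.infDist a B := fun a ha => ciInf_le hbdd ⟨a, ha⟩
  -- d = infDist 0 (closure (B - A))
  have hd0 : Metric.infDist (0 : X) (closure (B - A)) = d := by
    rw [Metric.infDist_closure]
    apply le_antisymm
    · apply le_ciInf
      rintro ⟨a, ha⟩
      apply le_infDist' hBne
      intro b hb
      have : Metric.infDist (0 : X) (B - A) ≤ dist (0 : X) (b - a) :=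
        Metric.infDist_le_dist_of_mem (Set.sub_mem_sub hb ha)
      simpa [dist_eq_norm, norm_sub_rev] using this
    · apply le_infDist' hBAne
      rintro _ ⟨b, hb, a, ha, rfl⟩
      calc d ≤ Metric.infDist a B := hdle a ha
        _ ≤ dist a b := Metric.infDist_le_dist_of_mem hb
        _ = dist (0 : X) (b - a) := by simp [dist_eq_norm, norm_sub_rev]
  -- ‖v‖ = d
  have hvd : ‖v‖ = d := by
    rw [← hd0]
    apply le_antisymm
    · apply le_infDist' hclne
      intro y hy
      simpa [dist_eq_norm] using hv.2 y hy
    · simpa [dist_eq_norm] using Metric.infDist_le_dist_of_mem (x := (0:X)) hv.1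
  -- d ≤ infDist b A for b ∈ B
  have hdleB : ∀ b ∈ B, d ≤ Metric.infDist b A := by
    intro b hb
    apply le_infDist' hAne
    intro a ha
    calc d ≤ Metric.infDist a B := hdle a ha
      _ ≤ dist a b := Metric.infDist_le_dist_of_mem hb
      _ = dist b a := dist_comm _ _
  -- key: any nearest point realization gives the vector v
  have key : ∀ x y : X, y ∈ closure (B - A) → ‖y‖ = d → y = v := by
    intro _ y hy hyd
    refine proj_unique hclconv hy hv.1 ?_ hv.2
    intro z hz
    have : Metric.infDist (0 : X) (closure (B - A)) ≤ dist 0 z :=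
      Metric.infDist_le_dist_of_mem hz
    rw [hd0] at this
    simpa [dist_eq_norm, hyd] using this
  constructor
  · intro e he
    rw [hE] at he
    obtain ⟨heA, hed⟩ := he
    -- PB e realizes infDist e B = d
    have hPBd : dist e (PB e) = d := by
      rw [← hed]
      exact le_antisymm (le_infDist' hBne (hPB e).2) (Metric.infDist_le_dist_of_mem (hPB e).1)
    have hmem : PB e - e ∈ closure (B - A) :=
      subset_closure (Set.sub_mem_sub (hPB e).1 heA)
    have hnorm : ‖PB e - e‖ = d := by
      rw [← hPBd, dist_eq_norm, norm_sub_rev]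
    have hveq : PB e - e = v := key e _ hmem hnorm
    have hPBe : PB e = e + v := by
      rw [← hveq]; abel
    refine ⟨hPBe, ?_⟩
    -- e + v ∈ F
    have hevB : e + v ∈ B := hPBe ▸ (hPB e).1
    have hevF : e + v ∈ F := by
      rw [hF]
      refine ⟨hevB, le_antisymm ?_ (hdleB _ hevB)⟩
      calc Metric.infDist (e + v) A ≤ dist (e + v) e := Metric.infDist_le_dist_of_mem heA
        _ = ‖v‖ := by simp [dist_eq_norm]
        _ = d := hvd
    -- PF e = e + v via uniqueness in B
    have hFsubB : F ⊆ B := by rw [hF]; exact fun x hx => hx.1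
    have hPFd : dist e (PF e) ≤ d := by
      calc dist e (PF e) ≤ dist e (e + v) := (hPF e).2 _ hevF
        _ = ‖v‖ := by simp [dist_eq_norm]
        _ = d := hvd
    refine proj_unique (x := e) hBconv (hFsubB (hPF e).1) hevB ?_ ?_
    · intro y hy
      refine le_trans hPFd ?_
      rw [← hed]
      exact Metric.infDist_le_dist_of_mem hy
    · intro y hy
      have : dist e (e + v) = d := by rw [← hvd]; simp [dist_eq_norm]
      rw [this, ← hed]
      exact Metric.infDist_le_dist_of_mem hy
  · intro f hf
    rw [hF] at hf
    obtain ⟨hfB, hfd⟩ := hf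
    have hPAd : dist f (PA f) = d := by
      rw [← hfd]
      exact le_antisymm (le_infDist' hAne (hPA f).2) (Metric.infDist_le_dist_of_mem (hPA f).1)
    have hmem : f - PA f ∈ closure (B - A) :=
      subset_closure (Set.sub_mem_sub hfB (hPA f).1)
    have hnorm : ‖f - PA f‖ = d := by rw [← hPAd, dist_eq_norm]
    have hveq : f - PA f = v := key f _ hmem hnorm
    have hPAf : PA f = f - v := by rw [← hveq]; abel
    refine ⟨hPAf, ?_⟩
    have hfvA : f - v ∈ A := hPAf ▸ (hPA f).1
    have hfvE : f - v ∈ E := by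
      rw [hE]
      refine ⟨hfvA, le_antisymm ?_ (hdle _ hfvA)⟩
      calc Metric.infDist (f - v) B ≤ dist (f - v) f := Metric.infDist_le_dist_of_mem hfB
        _ = ‖v‖ := by simp [dist_eq_norm, norm_sub_rev]
        _ = d := hvd
    have hEsubA : E ⊆ A := by rw [hE]; exact fun x hx => hx.1
    have hdfv : dist f (f - v) = d := by
      rw [← hvd]; simp [dist_eq_norm]
    have hPEd : dist f (PE f) ≤ d := by
      calc dist f (PE f) ≤ dist f (f - v) := (hPE f).2 _ hfvE
        _ = d := hdfv
    refine proj_unique (x := f) hAconv (hEsubA (hPE f).1) hfvA ?_ ?_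
    · intro y hy
      refine le_trans hPEd ?_
      rw [← hfd]
      exact Metric.infDist_le_dist_of_mem hy
    · intro y hy
      rw [hdfv, ← hfd]
      exact Metric.infDist_le_dist_of_mem hy
end

section
/- Let X be a Hilbert space, A, B nonempty closed convex subsets with displacement vector v, and suppose there exists e ∈ A ∩ (B - v) and x* ∈ S_{X*} with inf x*(B - v) = x*(e) = sup x*(A) and x* strongly exposing A at e. Then E = {a ∈ A : dist(a,B) = dist(A,B)} = {e}, i.e., E is a singleton. -/
/-!
A point `a ∈ A` realises `dist(A, B)` exactly when `a + v ∈ B`: the nearest point `b ∈ B`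
to `a` gives a vector `b - a ∈ cl(B - A)` of norm `‖v‖`, and the minimal-norm point of a
convex set is unique. Such an `a` lies in `A ∩ (B - v)`, so `x*(a) = x*(e)` is squeezed
between `sup x*(A)` and `inf x*(B - v)`; strong exposure applied to the constant sequence
at `a` forces `a = e`.
-/

open Pointwise

open Metric

theorem Convex.eq_of_norm_le_of_forall_norm_le {X : Type*} [NormedAddCommGroup X]
    [NormedSpace ℝ X] [StrictConvexSpace ℝ X] {C : Set X} (hC : Convex ℝ C) {v w : X}
    (hv : v ∈ C) (hw : w ∈ C) (hmin : ∀ y ∈ C, ‖v‖ ≤ ‖y‖) (hwv : ‖w‖ ≤ ‖v‖) :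
    w = v := by
  by_contra hne
  have hmid : (1 / 2 : ℝ) • w + (1 / 2 : ℝ) • v ∈ C :=
    hC hw hv (by norm_num) (by norm_num) (by norm_num)
  exact (hmin _ hmid).not_gt
    (norm_combo_lt_of_ne hwv le_rfl hne (by norm_num) (by norm_num) (by norm_num))

theorem IsClosed.exists_dist_eq_infDist_of_convex {X : Type*} [NormedAddCommGroup X]
    [InnerProductSpace ℝ X] [CompleteSpace X] {B : Set X} (hBc : IsClosed B)
    (hBconv : Convex ℝ B) (hBne : B.Nonempty) (x : X) :
    ∃ b ∈ B, dist x b = infDist x B := by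
  obtain ⟨b, hb, hmin⟩ :=
    exists_norm_eq_iInf_of_complete_convex hBne hBc.isComplete hBconv x
  exact ⟨b, hb, by simp only [dist_eq_norm, hmin, infDist_eq_iInf]⟩

theorem IsProjPt.norm_le {X : Type*} [NormedAddCommGroup X] {C : Set X} {v y : X}
    (hv : IsProjPt C 0 v) (hy : y ∈ C) : ‖v‖ ≤ ‖y‖ := by
  simpa using hv.2 y hy

section Displacement

variable {X : Type*} [NormedAddCommGroup X] {A B : Set X} {v a : X}

theorem IsProjPt.norm_le_infDist (hv : IsProjPt (closure (B - A)) 0 v) (hBne : B.Nonempty)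
    (ha : a ∈ A) : ‖v‖ ≤ infDist a B :=
  (le_infDist hBne).2 fun b hb => by
    rw [dist_comm, dist_eq_norm]
    exact hv.norm_le (subset_closure (Set.sub_mem_sub hb ha))

theorem IsProjPt.infDist_eq_norm_iff [InnerProductSpace ℝ X] [CompleteSpace X]
    (hv : IsProjPt (closure (B - A)) 0 v) (hAconv : Convex ℝ A) (hBc : IsClosed B)
    (hBconv : Convex ℝ B) (hBne : B.Nonempty) (ha : a ∈ A) :
    infDist a B = ‖v‖ ↔ a + v ∈ B := by
  constructor
  · intro hdist
    obtain ⟨b, hb, hab⟩ := hBc.exists_dist_eq_infDist_of_convex hBconv hBne a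
    have hba : b - a = v := by
      refine (hBconv.sub hAconv).closure.eq_of_norm_le_of_forall_norm_le
        hv.1 (subset_closure (Set.sub_mem_sub hb ha)) (fun y hy => hv.norm_le hy) ?_
      rw [← dist_eq_norm, dist_comm, hab, hdist]
    rwa [← hba, add_sub_cancel]
  · intro hav
    refine le_antisymm ?_ (hv.norm_le_infDist hBne ha)
    simpa [dist_eq_norm] using infDist_le_dist_of_mem (x := a) hav

end Displacement

theorem stmt10_general {X : Type*} [NormedAddCommGroup X] [InnerProductSpace ℝ X] [CompleteSpace X]
    (A B : Set X)
    (hBc : IsClosed B) (hAconv : Convex ℝ A) (hBconv : Convex ℝ B)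
    (v : X) (hv : IsProjPt (closure (B - A)) 0 v)
    (E : Set X)
    (hE : E = {a ∈ A | Metric.infDist a B = ⨅ a' : A, Metric.infDist (a' : X) B})
    (e : X) (he : e ∈ A ∩ ((· - v) '' B))
    (f : X →L[ℝ] ℝ)
    (hinf : ∀ b ∈ (· - v) '' B, f e ≤ f b) (hsup : ∀ a ∈ A, f a ≤ f e)
    (hexp : ∀ x : ℕ → X, (∀ n, x n ∈ A) →
      Filter.Tendsto (fun n => f (x n)) Filter.atTop (nhds (f e)) →
      Filter.Tendsto x Filter.atTop (nhds e)) :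
    E = {e} := by
  obtain ⟨heA, b, hbB, rfl⟩ := he
  have hBne : B.Nonempty := ⟨b, hbB⟩
  have hdist {a : X} (ha : a ∈ A) : infDist a B = ‖v‖ ↔ a + v ∈ B :=
    hv.infDist_eq_norm_iff hAconv hBc hBconv hBne ha
  have hdist_e : infDist (b - v) B = ‖v‖ := (hdist heA).2 (by rwa [sub_add_cancel])
  have hinf_eq : ⨅ a' : A, infDist (a' : X) B = ‖v‖ :=
    have : Nonempty A := ⟨⟨_, heA⟩⟩
    ciInf_eq_of_forall_ge_of_forall_gt_exists_lt (fun a => hv.norm_le_infDist hBne a.2)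
      fun w hw => ⟨⟨_, heA⟩, hdist_e.trans_lt hw⟩
  ext a
  simp only [hE, hinf_eq, Set.mem_ofPred_eq, Set.mem_singleton_iff]
  refine ⟨fun ⟨haA, ha⟩ => ?_, fun ha => ha ▸ ⟨heA, hdist_e⟩⟩
  have hfa : f a = f (b - v) :=
    (hsup a haA).antisymm (hinf a ⟨a + v, (hdist haA).1 ha, add_sub_cancel_right a v⟩)
  exact tendsto_nhds_unique tendsto_const_nhds
    (hexp (fun _ => a) (fun _ => haA) (by rw [hfa]; exact tendsto_const_nhds))

theorem stmt10 {X : Type*} [NormedAddCommGroup X] [InnerProductSpace ℝ X] [CompleteSpace X]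
    (A B : Set X) (hAne : A.Nonempty) (hBne : B.Nonempty)
    (hAc : IsClosed A) (hBc : IsClosed B) (hAconv : Convex ℝ A) (hBconv : Convex ℝ B)
    (v : X) (hv : IsProjPt (closure (B - A)) 0 v)
    (E : Set X)
    (hE : E = {a ∈ A | Metric.infDist a B = ⨅ a' : A, Metric.infDist (a' : X) B})
    (e : X) (he : e ∈ A ∩ ((· - v) '' B))
    (f : X →L[ℝ] ℝ) (hf : ‖f‖ = 1)
    (hinf : ∀ b ∈ (· - v) '' B, f e ≤ f b) (hsup : ∀ a ∈ A, f a ≤ f e)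
    (hexp : ∀ x : ℕ → X, (∀ n, x n ∈ A) →
      Filter.Tendsto (fun n => f (x n)) Filter.atTop (nhds (f e)) →
      Filter.Tendsto x Filter.atTop (nhds e)) :
    E = {e} :=
  stmt10_general A B hBc hAconv hBconv v hv E hE e he f hinf hsup hexp
end

section
/- Let X be a Hilbert space, A, B nonempty closed convex subsets with E, F (the proximal sets) nonempty, and let {A_n}, {B_n} be sequences of closed convex sets converging to A, B in the Attouch-Wets sense. If the perturbed alternating projection sequences a_n = P_{A_n}(b_n), b_n = P_{B_n}(a_{n-1}) satisfy a_n → e in norm, then e ∈ E (and b_n → e + v where v is the displacement vector). -/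
open Pointwise

/-- Attouch-Wets convergence of a sequence of sets: for each `N`, the truncated
Hausdorff "distance" `h_N` tends to `0`. -/
def AWTendsto {X : Type*} [NormedAddCommGroup X] (Cn : ℕ → Set X) (C : Set X) : Prop :=
  ∀ N : ℕ, Filter.Tendsto (fun n =>
      max (⨆ s : ↥(Cn n ∩ Metric.closedBall (0 : X) N), Metric.infDist (s : X) C)
          (⨆ s : ↥(C ∩ Metric.closedBall (0 : X) N), Metric.infDist (s : X) (Cn n)))
    Filter.atTop (nhds 0)

/-!
Projections onto Attouch–Wets convergent convex sets depend continuously on the point: if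
`x n → x₀` and `q n = P_{C n} (x n)`, then `q n` stays bounded, so it is asymptotically in `C`,
and nearby points of `C` form a minimizing sequence for the distance to `x₀`, which converges to
`P_C x₀` by the Pythagorean inequality `‖x₀ - P_C x₀‖² + ‖P_C x₀ - r‖² ≤ ‖x₀ - r‖²` (`r ∈ C`).
Passing to the limit in the recursion gives `b (n + 1) → f` with `f = P_B e` and `e = P_A f`.
For such a pair the variational inequalities of both projections give `‖f - e‖ ≤ ‖b' - a'‖`
for all `a' ∈ A`, `b' ∈ B`, so `f - e = v` and `e` minimizes the distance to `B` over `A`.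
-/

open Metric Filter Topology

section Metric

variable {X : Type*} [NormedAddCommGroup X]

lemma IsProjPt.dist_eq_infDist {C : Set X} {x p : X} (hp : IsProjPt C x p) :
    dist x p = infDist x C :=
  le_antisymm ((le_infDist ⟨p, hp.1⟩).2 hp.2) (infDist_le_dist_of_mem hp.1)

lemma IsProjPt.closure {C : Set X} {x p : X} (hp : IsProjPt C x p) :
    IsProjPt (closure C) x p := by
  refine ⟨subset_closure hp.1, fun y hy => ?_⟩
  have hclosed : IsClosed {y | dist x p ≤ dist x y} :=
    isClosed_le continuous_const (continuous_const.dist continuous_id)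
  exact hclosed.closure_subset_iff.2 hp.2 hy

lemma isProjPt_iff_norm_eq_iInf {C : Set X} {x p : X} (hp : p ∈ C) :
    IsProjPt C x p ↔ ‖x - p‖ = ⨅ w : C, ‖x - w‖ := by
  have : Nonempty C := ⟨⟨p, hp⟩⟩
  have hbdd : BddBelow (Set.range fun w : C => ‖x - w‖) :=
    ⟨0, Set.forall_mem_range.2 fun _ => norm_nonneg _⟩
  simp only [IsProjPt, hp, true_and, dist_eq_norm]
  exact ⟨fun h => le_antisymm (le_ciInf fun w => h w w.2) (ciInf_le hbdd ⟨p, hp⟩),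
    fun h y hy => h ▸ ciInf_le hbdd ⟨y, hy⟩⟩

lemma exists_tendsto_dist_zero_of_tendsto_infDist {α : Type*} [PseudoMetricSpace α] {C : Set α}
    (hC : C.Nonempty) {p : ℕ → α} (h : Tendsto (fun n => infDist (p n) C) atTop (𝓝 0)) :
    ∃ q : ℕ → α, (∀ n, q n ∈ C) ∧ Tendsto (fun n => dist (p n) (q n)) atTop (𝓝 0) := by
  have hnear : ∀ n : ℕ, ∃ q ∈ C, dist (p n) q < infDist (p n) C + 1 / (n + 1) := fun n =>
    (infDist_lt_iff hC).1 (lt_add_of_pos_right _ Nat.one_div_pos_of_nat)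
  choose q hqC hq using hnear
  refine ⟨q, hqC, squeeze_zero (fun _ => dist_nonneg) (fun n => (hq n).le) ?_⟩
  simpa using h.add tendsto_one_div_add_atTop_nhds_zero_nat

lemma infDist_le_iSup_inter_closedBall {S T : Set X} {s : X} {N : ℝ} (hs : s ∈ S)
    (hsN : ‖s‖ ≤ N) :
    infDist s T ≤ ⨆ t : ↥(S ∩ closedBall (0 : X) N), infDist (t : X) T := by
  have hbdd : BddAbove (Set.range fun t : ↥(S ∩ closedBall (0 : X) N) => infDist (t : X) T) := by
    refine ⟨infDist 0 T + N, Set.forall_mem_range.2 fun t => ?_⟩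
    have htN : dist (t : X) 0 ≤ N := mem_closedBall.1 t.2.2
    linarith [infDist_le_infDist_add_dist (x := (t : X)) (y := 0) (s := T)]
  exact le_ciSup hbdd ⟨s, hs, mem_closedBall_zero_iff.2 hsN⟩

namespace AWTendsto

variable {Cn : ℕ → Set X} {C : Set X}

lemma comp (hAW : AWTendsto Cn C) {φ : ℕ → ℕ} (hφ : Tendsto φ atTop atTop) :
    AWTendsto (Cn ∘ φ) C :=
  fun N => (hAW N).comp hφ

lemma tendsto_infDist_of_mem (hAW : AWTendsto Cn C) {y : X} (hy : y ∈ C) :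
    Tendsto (fun n => infDist y (Cn n)) atTop (𝓝 0) := by
  obtain ⟨N, hN⟩ := exists_nat_ge ‖y‖
  exact squeeze_zero (fun _ => infDist_nonneg)
    (fun n => (infDist_le_iSup_inter_closedBall hy hN).trans (le_max_right _ _)) (hAW N)

lemma tendsto_infDist_of_norm_le (hAW : AWTendsto Cn C) {p : ℕ → X} (hp : ∀ n, p n ∈ Cn n)
    {R : ℝ} (hR : ∀ n, ‖p n‖ ≤ R) :
    Tendsto (fun n => infDist (p n) C) atTop (𝓝 0) := by
  obtain ⟨N, hN⟩ := exists_nat_ge R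
  exact squeeze_zero (fun _ => infDist_nonneg)
    (fun n => (infDist_le_iSup_inter_closedBall (hp n) ((hR n).trans hN)).trans
      (le_max_left _ _)) (hAW N)

end AWTendsto

end Metric

section Hilbert

variable {X : Type*} [NormedAddCommGroup X] [InnerProductSpace ℝ X] {C : Set X} {x p : X}

lemma exists_isProjPt [CompleteSpace X] (hne : C.Nonempty) (hc : IsClosed C)
    (hconv : Convex ℝ C) (x : X) : ∃ p, IsProjPt C x p := by
  obtain ⟨p, hpC, hp⟩ := exists_norm_eq_iInf_of_complete_convex hne hc.isComplete hconv x
  exact ⟨p, (isProjPt_iff_norm_eq_iInf hpC).2 hp⟩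

lemma IsProjPt.inner_sub_nonpos (hC : Convex ℝ C) (hp : IsProjPt C x p) :
    ∀ w ∈ C, inner ℝ (x - p) (w - p) ≤ 0 :=
  (norm_eq_iInf_iff_real_inner_le_zero hC hp.1).1 ((isProjPt_iff_norm_eq_iInf hp.1).1 hp)

lemma IsProjPt.dist_sq_add_dist_sq_le (hC : Convex ℝ C) (hp : IsProjPt C x p) {q : X}
    (hq : q ∈ C) : dist x p ^ 2 + dist p q ^ 2 ≤ dist x q ^ 2 := by
  have hinner := hp.inner_sub_nonpos hC q hq
  have hexpand := norm_add_sq_real (x - p) (p - q)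
  rw [sub_add_sub_cancel, ← neg_sub q p, inner_neg_right, norm_neg] at hexpand
  rw [dist_eq_norm, dist_eq_norm, dist_eq_norm, norm_sub_rev p q]
  linarith

lemma IsProjPt.unique (hC : Convex ℝ C) {q : X} (hp : IsProjPt C x p) (hq : IsProjPt C x q) :
    p = q := by
  have h := hp.dist_sq_add_dist_sq_le hC hq.1
  have hle := hq.2 p hp.1
  have hpq : dist p q ^ 2 ≤ 0 := by nlinarith [dist_nonneg (x := x) (y := q)]
  exact dist_eq_zero.1 (pow_eq_zero_iff two_ne_zero |>.1 (le_antisymm hpq (sq_nonneg _)))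

lemma IsProjPt.tendsto_of_tendsto_dist {ι : Type*} {l : Filter ι} (hC : Convex ℝ C)
    (hp : IsProjPt C x p) {q : ι → X} (hq : ∀ i, q i ∈ C)
    (h : Tendsto (fun i => dist x (q i)) l (𝓝 (dist x p))) : Tendsto q l (𝓝 p) := by
  have hsq : Tendsto (fun i => dist x (q i) ^ 2 - dist x p ^ 2) l (𝓝 0) := by
    have := (h.pow 2).sub_const (dist x p ^ 2)
    rwa [sub_self] at this
  have hdist_sq : Tendsto (fun i => dist (q i) p ^ 2) l (𝓝 0) :=
    squeeze_zero (fun _ => sq_nonneg _) (fun i => by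
      have := hp.dist_sq_add_dist_sq_le hC (hq i)
      rw [dist_comm p] at this
      linarith) hsq
  refine tendsto_iff_dist_tendsto_zero.2 ?_
  simpa [Real.sqrt_sq dist_nonneg] using hdist_sq.sqrt

lemma AWTendsto.tendsto_of_isProjPt {Cn : ℕ → Set X} (hAW : AWTendsto Cn C) (hC : Convex ℝ C)
    {x q : ℕ → X} {x₀ p₀ : X} (hx : Tendsto x atTop (𝓝 x₀))
    (hq : ∀ n, IsProjPt (Cn n) (x n) (q n)) (hp₀ : IsProjPt C x₀ p₀) :
    Tendsto q atTop (𝓝 p₀) := by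
  set w : ℕ → ℝ := fun n => infDist p₀ (Cn n) + dist (x n) p₀
  have hw : Tendsto w atTop (𝓝 (dist x₀ p₀)) := by
    simpa [w] using (hAW.tendsto_infDist_of_mem hp₀.1).add (hx.dist tendsto_const_nhds)
  have hxq : ∀ n, dist (x n) (q n) ≤ w n := fun n =>
    (hq n).dist_eq_infDist ▸ infDist_le_infDist_add_dist
  obtain ⟨R, hR⟩ := ((hx.norm).add hw).bddAbove_range
  have hqR : ∀ n, ‖q n‖ ≤ R := fun n => by
    have hR' := hR (Set.mem_range_self n)
    have := norm_le_norm_add_norm_sub' (q n) (x n)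
    rw [← dist_eq_norm'] at this
    linarith [hxq n]
  obtain ⟨r, hrC, hqr⟩ := exists_tendsto_dist_zero_of_tendsto_infDist ⟨p₀, hp₀.1⟩
    (hAW.tendsto_infDist_of_norm_le (fun n => (hq n).1) hqR)
  have hr : Tendsto (fun n => dist x₀ (r n)) atTop (𝓝 (dist x₀ p₀)) := by
    refine tendsto_of_tendsto_of_tendsto_of_le_of_le tendsto_const_nhds
      (by simpa using (((tendsto_const_nhds (x := x₀)).dist hx).add hw).add hqr)
      (fun n => hp₀.2 _ (hrC n)) (fun n => ?_)
    linarith [dist_triangle4 x₀ (x n) (q n) (r n), hxq n]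
  exact (hp₀.tendsto_of_tendsto_dist hC hrC hr).congr_dist (by simpa only [dist_comm] using hqr)

variable {A B : Set X} {e f : X}

lemma IsProjPt.isProjPt_sub (hA : Convex ℝ A) (hB : Convex ℝ B) (hf : IsProjPt B e f)
    (he : IsProjPt A f e) : IsProjPt (B - A) 0 (f - e) := by
  refine ⟨Set.sub_mem_sub hf.1 he.1, ?_⟩
  rintro _ ⟨b, hb, a, ha, rfl⟩
  simp only [dist_zero_left]
  have hB' := hf.inner_sub_nonpos hB b hb
  have hA' := he.inner_sub_nonpos hA a ha
  -- by the two projection inequalities, the outer terms have nonnegative inner product with `f - e`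
  have hsplit : b - a = (b - f) + (f - e) + (e - a) := by abel
  have hlow : ‖f - e‖ ^ 2 ≤ inner ℝ (f - e) (b - a) := by
    have hfb : inner ℝ (f - e) (b - f) = -inner ℝ (e - f) (b - f) := by
      rw [← inner_neg_left, neg_sub]
    have hea : inner ℝ (f - e) (e - a) = -inner ℝ (f - e) (a - e) := by
      rw [← inner_neg_right, neg_sub]
    rw [hsplit, inner_add_right, inner_add_right, real_inner_self_eq_norm_sq, hfb, hea]
    linarith
  have hcs := real_inner_le_norm (f - e) (b - a)
  rcases (norm_nonneg (f - e)).eq_or_lt with h0 | h0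
  · exact h0 ▸ norm_nonneg _
  · exact le_of_mul_le_mul_left (by nlinarith) h0

lemma IsProjPt.infDist_eq_iInf (hA : Convex ℝ A) (hB : Convex ℝ B) (hf : IsProjPt B e f)
    (he : IsProjPt A f e) : infDist e B = ⨅ a : A, infDist (a : X) B := by
  have hmin := (hf.isProjPt_sub hA hB he).2
  have hle : ∀ a ∈ A, infDist e B ≤ infDist a B := fun a ha =>
    (le_infDist ⟨f, hf.1⟩).2 fun b hb => by
      have := hmin (b - a) (Set.sub_mem_sub hb ha)
      rw [dist_zero_left, dist_zero_left] at this
      exact (infDist_le_dist_of_mem hf.1).trans (by rw [dist_eq_norm', dist_eq_norm']; exact this)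
  have : Nonempty A := ⟨⟨e, he.1⟩⟩
  have hbdd : BddBelow (Set.range fun a : A => infDist (a : X) B) :=
    ⟨0, Set.forall_mem_range.2 fun _ => infDist_nonneg⟩
  exact le_antisymm (le_ciInf fun a => hle a a.2) (ciInf_le hbdd ⟨e, he.1⟩)

end Hilbert

theorem stmt16_general {X : Type*} [NormedAddCommGroup X] [InnerProductSpace ℝ X] [CompleteSpace X]
    (A B : Set X) (hAne : A.Nonempty) (hBne : B.Nonempty)
    (hAc : IsClosed A) (hBc : IsClosed B) (hAconv : Convex ℝ A) (hBconv : Convex ℝ B)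
    (v : X) (hv : IsProjPt (closure (B - A)) 0 v)
    (E : Set X)
    (hE : E = {a ∈ A | Metric.infDist a B = ⨅ a' : A, Metric.infDist (a' : X) B})
    (An Bn : ℕ → Set X)
    (hAnAW : AWTendsto An A) (hBnAW : AWTendsto Bn B)
    (a b : ℕ → X)
    (hb : ∀ n : ℕ, IsProjPt (Bn (n + 1)) (a n) (b (n + 1)))
    (ha : ∀ n : ℕ, IsProjPt (An (n + 1)) (b (n + 1)) (a (n + 1)))
    (e : X) (hconv : Filter.Tendsto a Filter.atTop (nhds e)) :
    e ∈ E ∧ Filter.Tendsto b Filter.atTop (nhds (e + v)) := by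
  obtain ⟨f, hf⟩ := exists_isProjPt hBne hBc hBconv e
  have hbf : Tendsto (fun n => b (n + 1)) atTop (𝓝 f) :=
    (hBnAW.comp (tendsto_add_atTop_nat 1)).tendsto_of_isProjPt hBconv hconv hb hf
  obtain ⟨g, hg⟩ := exists_isProjPt hAne hAc hAconv f
  have hag : Tendsto (fun n => a (n + 1)) atTop (𝓝 g) :=
    (hAnAW.comp (tendsto_add_atTop_nat 1)).tendsto_of_isProjPt hAconv hbf ha hg
  obtain rfl : e = g := tendsto_nhds_unique ((tendsto_add_atTop_iff_nat 1).2 hconv) hag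
  have hfv : f - e = v :=
    ((hf.isProjPt_sub hAconv hBconv hg).closure).unique (hBconv.sub hAconv).closure hv
  refine ⟨hE ▸ ⟨hg.1, hf.infDist_eq_iInf hAconv hBconv hg⟩, ?_⟩
  rw [← hfv, add_sub_cancel]
  exact (tendsto_add_atTop_iff_nat 1).1 hbf

theorem stmt16 {X : Type*} [NormedAddCommGroup X] [InnerProductSpace ℝ X] [CompleteSpace X]
    (A B : Set X) (hAne : A.Nonempty) (hBne : B.Nonempty)
    (hAc : IsClosed A) (hBc : IsClosed B) (hAconv : Convex ℝ A) (hBconv : Convex ℝ B)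
    (v : X) (hv : IsProjPt (closure (B - A)) 0 v)
    (E F : Set X)
    (hE : E = {a ∈ A | Metric.infDist a B = ⨅ a' : A, Metric.infDist (a' : X) B})
    (hF : F = {b ∈ B | Metric.infDist b A = ⨅ a' : A, Metric.infDist (a' : X) B})
    (hEne : E.Nonempty) (hFne : F.Nonempty)
    (An Bn : ℕ → Set X)
    (hAn : ∀ n, (An n).Nonempty ∧ IsClosed (An n) ∧ Convex ℝ (An n))
    (hBn : ∀ n, (Bn n).Nonempty ∧ IsClosed (Bn n) ∧ Convex ℝ (Bn n))
    (hAnAW : AWTendsto An A) (hBnAW : AWTendsto Bn B)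
    (a b : ℕ → X)
    (hb : ∀ n : ℕ, IsProjPt (Bn (n + 1)) (a n) (b (n + 1)))
    (ha : ∀ n : ℕ, IsProjPt (An (n + 1)) (b (n + 1)) (a (n + 1)))
    (e : X) (hconv : Filter.Tendsto a Filter.atTop (nhds e)) :
    e ∈ E ∧ Filter.Tendsto b Filter.atTop (nhds (e + v)) :=
  stmt16_general A B hAne hBne hAc hBc hAconv hBconv v hv E hE An Bn hAnAW hBnAW a b hb ha e hconv
end
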